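/- For every positive integer n with n ≡ 0 or 1 (mod 4), t(2,3,3;n) = 4·N(1,3,3;n+1). -/
import Mathlib

def tri (x : ℤ) : ℤ := x * (x + 1) / 2

noncomputable def N (a b c n : ℕ) : ℕ :=
  Nat.card {p : ℤ × ℤ × ℤ // (n : ℤ) = a * p.1 ^ 2 + b * p.2.1 ^ 2 + c * p.2.2 ^ 2}

noncomputable def t (a b c n : ℕ) : ℕ :=
  Nat.card {p : ℤ × ℤ × ℤ // (n : ℤ) = a * tri p.1 + b * tri p.2.1 + c * tri p.2.2}

noncomputable def T (a b c n : ℕ) : ℕ :=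
  Nat.card {p : ℕ × ℕ × ℕ // (n : ℤ) = a * tri p.1 + b * tri p.2.1 + c * tri p.2.2}

lemma two_tri (x : ℤ) : 2 * tri x = x * (x + 1) :=
  Int.mul_ediv_cancel' (even_iff_two_dvd.mp (Int.even_mul_succ_self x))

lemma sq_mod4 (t : ℤ) : t ^ 2 % 4 = t % 2 := by
  rcases (by omega : t % 2 = 0 ∨ t % 2 = 1) with h | h
  · obtain ⟨k, rfl⟩ : ∃ k, t = 2 * k := ⟨t / 2, by omega⟩
    have e : (2 * k) ^ 2 = 4 * k ^ 2 := by ring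
    rw [e]; obtain ⟨K, hK⟩ : ∃ K, k ^ 2 = K := ⟨_, rfl⟩; rw [hK]; omega
  · obtain ⟨k, rfl⟩ : ∃ k, t = 2 * k + 1 := ⟨t / 2, by omega⟩
    have e : (2 * k + 1) ^ 2 = 4 * (k ^ 2 + k) + 1 := by ring
    rw [e]; obtain ⟨K, hK⟩ : ∃ K, k ^ 2 + k = K := ⟨_, rfl⟩; rw [hK]; omega

lemma parity_facts (m a b c : ℤ) (hm : m % 4 = 1 ∨ m % 4 = 2)
    (h : m = a ^ 2 + 3 * b ^ 2 + 3 * c ^ 2) :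
    (a % 2 = 1 ∧ b % 2 = 0 ∧ c % 2 = 0) ∨ (a % 2 = 0 ∧ b % 2 = 1 ∧ c % 2 = 1) := by
  have ha := sq_mod4 a; have hb := sq_mod4 b; have hc := sq_mod4 c
  generalize hA : a ^ 2 = A at ha h
  generalize hB : b ^ 2 = B at hb h
  generalize hC : c ^ 2 = C at hc h
  rcases (by omega : a % 2 = 0 ∨ a % 2 = 1) with h1 | h1 <;>
  rcases (by omega : b % 2 = 0 ∨ b % 2 = 1) with h2 | h2 <;>
  rcases (by omega : c % 2 = 0 ∨ c % 2 = 1) with h3 | h3 <;>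
  omega

/-- Forward map: from a representation `n = 2·tri x + 3·tri y + 3·tri z` to a
branch index together with a representation `n + 1 = a² + 3b² + 3c²`. -/
def Fm (v : ℤ × ℤ × ℤ) : Fin 4 × (ℤ × ℤ × ℤ) :=
  if (v.2.1 - v.2.2) % 2 = 0 then
    if (2 * v.1 - v.2.1 - v.2.2) % 4 = 0 then
      (0, ((2 * v.1 + 3 * v.2.1 + 3 * v.2.2 + 4) / 4,
           (2 * v.1 - v.2.1 - v.2.2) / 4, (v.2.1 - v.2.2) / 2))
    else
      (1, ((2 * v.1 - 3 * v.2.1 - 3 * v.2.2 - 2) / 4,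
           (2 * v.1 + v.2.1 + v.2.2 + 2) / 4, (v.2.1 - v.2.2) / 2))
  else
    if (2 * v.1 - v.2.1 + v.2.2 + 1) % 4 = 0 then
      (2, ((2 * v.1 + 3 * v.2.1 - 3 * v.2.2 + 1) / 4,
           (v.2.1 + v.2.2 + 1) / 2, (2 * v.1 - v.2.1 + v.2.2 + 1) / 4))
    else
      (3, ((2 * v.1 - 3 * v.2.1 + 3 * v.2.2 + 1) / 4,
           (v.2.1 + v.2.2 + 1) / 2, (2 * v.1 + v.2.1 - v.2.2 + 1) / 4))

/-- Backward map. -/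
def Gm (i : Fin 4) (w : ℤ × ℤ × ℤ) : ℤ × ℤ × ℤ :=
  if i.val = 0 then
    ((w.1 + 3 * w.2.1 - 1) / 2, (w.1 - w.2.1 + 2 * w.2.2 - 1) / 2,
     (w.1 - w.2.1 - 2 * w.2.2 - 1) / 2)
  else if i.val = 1 then
    ((w.1 + 3 * w.2.1 - 1) / 2, (-w.1 + w.2.1 + 2 * w.2.2 - 1) / 2,
     (-w.1 + w.2.1 - 2 * w.2.2 - 1) / 2)
  else if i.val = 2 then
    ((w.1 + 3 * w.2.2 - 1) / 2, (w.1 + 2 * w.2.1 - w.2.2 - 1) / 2,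
     (-w.1 + 2 * w.2.1 + w.2.2 - 1) / 2)
  else
    ((w.1 + 3 * w.2.2 - 1) / 2, (-w.1 + 2 * w.2.1 + w.2.2 - 1) / 2,
     (w.1 + 2 * w.2.1 - w.2.2 - 1) / 2)

lemma hF (n : ℕ) (v : ℤ × ℤ × ℤ)
    (hv : 2 * (n : ℤ) = 2 * (v.1 * (v.1 + 1)) + 3 * (v.2.1 * (v.2.1 + 1)) + 3 * (v.2.2 * (v.2.2 + 1))) :
    (n : ℤ) + 1 = (Fm v).2.1 ^ 2 + 3 * (Fm v).2.2.1 ^ 2 + 3 * (Fm v).2.2.2 ^ 2 := by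
  obtain ⟨x, y, z⟩ := v
  simp only at hv
  unfold Fm
  dsimp only
  split_ifs with h0 h1 h1 <;> dsimp only
  · obtain ⟨A, hA1, hA⟩ : ∃ A, (2 * x + 3 * y + 3 * z + 4) / 4 = A ∧ 4 * A = 2 * x + 3 * y + 3 * z + 4 :=
      ⟨_, rfl, by omega⟩
    obtain ⟨B, hB1, hB⟩ : ∃ B, (2 * x - y - z) / 4 = B ∧ 4 * B = 2 * x - y - z := ⟨_, rfl, by omega⟩
    obtain ⟨C, hC1, hC⟩ : ∃ C, (y - z) / 2 = C ∧ 2 * C = y - z := ⟨_, rfl, by omega⟩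
    rw [hA1, hB1, hC1]
    have big : 16 * ((n : ℤ) + 1) = 16 * (A ^ 2 + 3 * B ^ 2 + 3 * C ^ 2) := by
      linear_combination 8 * hv - (4 * A + (2 * x + 3 * y + 3 * z + 4)) * hA -
        3 * (4 * B + (2 * x - y - z)) * hB - 12 * (2 * C + (y - z)) * hC
    linarith
  · obtain ⟨A, hA1, hA⟩ : ∃ A, (2 * x - 3 * y - 3 * z - 2) / 4 = A ∧ 4 * A = 2 * x - 3 * y - 3 * z - 2 :=
      ⟨_, rfl, by omega⟩
    obtain ⟨B, hB1, hB⟩ : ∃ B, (2 * x + y + z + 2) / 4 = B ∧ 4 * B = 2 * x + y + z + 2 := ⟨_, rfl, by omega⟩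
    obtain ⟨C, hC1, hC⟩ : ∃ C, (y - z) / 2 = C ∧ 2 * C = y - z := ⟨_, rfl, by omega⟩
    rw [hA1, hB1, hC1]
    have big : 16 * ((n : ℤ) + 1) = 16 * (A ^ 2 + 3 * B ^ 2 + 3 * C ^ 2) := by
      linear_combination 8 * hv - (4 * A + (2 * x - 3 * y - 3 * z - 2)) * hA -
        3 * (4 * B + (2 * x + y + z + 2)) * hB - 12 * (2 * C + (y - z)) * hC
    linarith
  · obtain ⟨A, hA1, hA⟩ : ∃ A, (2 * x + 3 * y - 3 * z + 1) / 4 = A ∧ 4 * A = 2 * x + 3 * y - 3 * z + 1 :=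
      ⟨_, rfl, by omega⟩
    obtain ⟨B, hB1, hB⟩ : ∃ B, (y + z + 1) / 2 = B ∧ 2 * B = y + z + 1 := ⟨_, rfl, by omega⟩
    obtain ⟨C, hC1, hC⟩ : ∃ C, (2 * x - y + z + 1) / 4 = C ∧ 4 * C = 2 * x - y + z + 1 := ⟨_, rfl, by omega⟩
    rw [hA1, hB1, hC1]
    have big : 16 * ((n : ℤ) + 1) = 16 * (A ^ 2 + 3 * B ^ 2 + 3 * C ^ 2) := by
      linear_combination 8 * hv - (4 * A + (2 * x + 3 * y - 3 * z + 1)) * hA -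
        12 * (2 * B + (y + z + 1)) * hB - 3 * (4 * C + (2 * x - y + z + 1)) * hC
    linarith
  · obtain ⟨A, hA1, hA⟩ : ∃ A, (2 * x - 3 * y + 3 * z + 1) / 4 = A ∧ 4 * A = 2 * x - 3 * y + 3 * z + 1 :=
      ⟨_, rfl, by omega⟩
    obtain ⟨B, hB1, hB⟩ : ∃ B, (y + z + 1) / 2 = B ∧ 2 * B = y + z + 1 := ⟨_, rfl, by omega⟩
    obtain ⟨C, hC1, hC⟩ : ∃ C, (2 * x + y - z + 1) / 4 = C ∧ 4 * C = 2 * x + y - z + 1 := ⟨_, rfl, by omega⟩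
    rw [hA1, hB1, hC1]
    have big : 16 * ((n : ℤ) + 1) = 16 * (A ^ 2 + 3 * B ^ 2 + 3 * C ^ 2) := by
      linear_combination 8 * hv - (4 * A + (2 * x - 3 * y + 3 * z + 1)) * hA -
        12 * (2 * B + (y + z + 1)) * hB - 3 * (4 * C + (2 * x + y - z + 1)) * hC
    linarith

lemma hG (n : ℕ) (i : Fin 4) (w : ℤ × ℤ × ℤ)
    (hp1 : w.2.1 % 2 = w.2.2 % 2) (hp2 : w.1 % 2 ≠ w.2.1 % 2)
    (hw : (n : ℤ) + 1 = w.1 ^ 2 + 3 * w.2.1 ^ 2 + 3 * w.2.2 ^ 2) :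
    2 * (n : ℤ) = 2 * ((Gm i w).1 * ((Gm i w).1 + 1)) +
      3 * ((Gm i w).2.1 * ((Gm i w).2.1 + 1)) + 3 * ((Gm i w).2.2 * ((Gm i w).2.2 + 1)) := by
  obtain ⟨a, b, c⟩ := w
  simp only at hp1 hp2 hw
  fin_cases i <;> simp only [Gm, Fin.isValue] <;> norm_num
  · obtain ⟨X, hX1, hX⟩ : ∃ X, (a + 3 * b - 1) / 2 = X ∧ 2 * X = a + 3 * b - 1 := ⟨_, rfl, by omega⟩
    obtain ⟨Y, hY1, hY⟩ : ∃ Y, (a - b + 2 * c - 1) / 2 = Y ∧ 2 * Y = a - b + 2 * c - 1 := ⟨_, rfl, by omega⟩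
    obtain ⟨Z, hZ1, hZ⟩ : ∃ Z, (a - b - 2 * c - 1) / 2 = Z ∧ 2 * Z = a - b - 2 * c - 1 := ⟨_, rfl, by omega⟩
    rw [hX1, hY1, hZ1]
    have big : 8 * (n : ℤ) = 8 * (X * (X + 1)) + 12 * (Y * (Y + 1)) + 12 * (Z * (Z + 1)) := by
      linear_combination 8 * hw - 2 * (2 * X + a + 3 * b + 1) * hX -
        3 * (2 * Y + a - b + 2 * c + 1) * hY - 3 * (2 * Z + a - b - 2 * c + 1) * hZ
    linarith
  · obtain ⟨X, hX1, hX⟩ : ∃ X, (a + 3 * b - 1) / 2 = X ∧ 2 * X = a + 3 * b - 1 := ⟨_, rfl, by omega⟩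
    obtain ⟨Y, hY1, hY⟩ : ∃ Y, (-a + b + 2 * c - 1) / 2 = Y ∧ 2 * Y = -a + b + 2 * c - 1 := ⟨_, rfl, by omega⟩
    obtain ⟨Z, hZ1, hZ⟩ : ∃ Z, (-a + b - 2 * c - 1) / 2 = Z ∧ 2 * Z = -a + b - 2 * c - 1 := ⟨_, rfl, by omega⟩
    rw [hX1, hY1, hZ1]
    have big : 8 * (n : ℤ) = 8 * (X * (X + 1)) + 12 * (Y * (Y + 1)) + 12 * (Z * (Z + 1)) := by
      linear_combination 8 * hw - 2 * (2 * X + a + 3 * b + 1) * hX -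
        3 * (2 * Y - a + b + 2 * c + 1) * hY - 3 * (2 * Z - a + b - 2 * c + 1) * hZ
    linarith
  · obtain ⟨X, hX1, hX⟩ : ∃ X, (a + 3 * c - 1) / 2 = X ∧ 2 * X = a + 3 * c - 1 := ⟨_, rfl, by omega⟩
    obtain ⟨Y, hY1, hY⟩ : ∃ Y, (a + 2 * b - c - 1) / 2 = Y ∧ 2 * Y = a + 2 * b - c - 1 := ⟨_, rfl, by omega⟩
    obtain ⟨Z, hZ1, hZ⟩ : ∃ Z, (-a + 2 * b + c - 1) / 2 = Z ∧ 2 * Z = -a + 2 * b + c - 1 := ⟨_, rfl, by omega⟩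
    rw [hX1, hY1, hZ1]
    have big : 8 * (n : ℤ) = 8 * (X * (X + 1)) + 12 * (Y * (Y + 1)) + 12 * (Z * (Z + 1)) := by
      linear_combination 8 * hw - 2 * (2 * X + a + 3 * c + 1) * hX -
        3 * (2 * Y + a + 2 * b - c + 1) * hY - 3 * (2 * Z - a + 2 * b + c + 1) * hZ
    linarith
  · obtain ⟨X, hX1, hX⟩ : ∃ X, (a + 3 * c - 1) / 2 = X ∧ 2 * X = a + 3 * c - 1 := ⟨_, rfl, by omega⟩
    obtain ⟨Y, hY1, hY⟩ : ∃ Y, (-a + 2 * b + c - 1) / 2 = Y ∧ 2 * Y = -a + 2 * b + c - 1 := ⟨_, rfl, by omega⟩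
    obtain ⟨Z, hZ1, hZ⟩ : ∃ Z, (a + 2 * b - c - 1) / 2 = Z ∧ 2 * Z = a + 2 * b - c - 1 := ⟨_, rfl, by omega⟩
    rw [hX1, hY1, hZ1]
    have big : 8 * (n : ℤ) = 8 * (X * (X + 1)) + 12 * (Y * (Y + 1)) + 12 * (Z * (Z + 1)) := by
      linear_combination 8 * hw - 2 * (2 * X + a + 3 * c + 1) * hX -
        3 * (2 * Y - a + 2 * b + c + 1) * hY - 3 * (2 * Z + a + 2 * b - c + 1) * hZ
    linarith

lemma hGF (v : ℤ × ℤ × ℤ) : Gm (Fm v).1 (Fm v).2 = v := by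
  obtain ⟨x, y, z⟩ := v
  unfold Fm
  dsimp only
  split_ifs with h0 h1 h1 <;>
    · unfold Gm
      simp only [show ((0:Fin 4)).val = 0 from rfl, show ((1:Fin 4)).val = 1 from rfl,
        show ((2:Fin 4)).val = 2 from rfl, show ((3:Fin 4)).val = 3 from rfl,
        reduceIte, if_true]
      try norm_num
      try simp only [Prod.mk.injEq]
      and_intros <;> first | omega | trivial

set_option maxHeartbeats 2000000 in
lemma hFG (i : Fin 4) (w : ℤ × ℤ × ℤ)
    (hpar : (w.1 % 2 = 1 ∧ w.2.1 % 2 = 0 ∧ w.2.2 % 2 = 0) ∨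
            (w.1 % 2 = 0 ∧ w.2.1 % 2 = 1 ∧ w.2.2 % 2 = 1)) :
    Fm (Gm i w) = (i, w) := by
  obtain ⟨a, b, c⟩ := w
  simp only at hpar
  rcases hpar with ⟨p1, p2, p3⟩ | ⟨p1, p2, p3⟩ <;>
  fin_cases i <;>
    · unfold Gm
      dsimp only
      norm_num
      unfold Fm
      dsimp only
      split_ifs with h0 h1 h1 <;>
        first
          | (exfalso; omega)
          | (simp only [Prod.mk.injEq]
             and_intros <;> first | omega | trivial)

theorem stmt4 (n : ℕ) (hn : 0 < n) (h : n % 4 = 0 ∨ n % 4 = 1) :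
    t 2 3 3 n = 4 * N 1 3 3 (n + 1) := by
  have hm : ((n : ℤ) + 1) % 4 = 1 ∨ ((n : ℤ) + 1) % 4 = 2 := by omega
  have hcard : (4 : ℕ) = Nat.card (Fin 4) := by simp
  unfold t N
  rw [hcard, ← Nat.card_prod]
  refine Nat.card_congr ?_
  refine
    { toFun := fun s => ((Fm s.1).1, ⟨(Fm s.1).2, ?_⟩),
      invFun := fun q => ⟨Gm q.1 q.2.1, ?_⟩,
      left_inv := fun s => Subtype.ext (hGF s.1),
      right_inv := fun q => ?_ }
  · have hv : 2 * (n : ℤ) = 2 * (s.1.1 * (s.1.1 + 1)) + 3 * (s.1.2.1 * (s.1.2.1 + 1)) +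
        3 * (s.1.2.2 * (s.1.2.2 + 1)) := by
      have h2 := s.2
      push_cast at h2
      have t1 := two_tri s.1.1; have t2 := two_tri s.1.2.1; have t3 := two_tri s.1.2.2
      linarith
    have key := hF n s.1 hv
    push_cast
    linarith
  · have hw : (n : ℤ) + 1 = q.2.1.1 ^ 2 + 3 * q.2.1.2.1 ^ 2 + 3 * q.2.1.2.2 ^ 2 := by
      have h2 := q.2.2
      push_cast at h2
      linarith
    have hpar := parity_facts ((n : ℤ) + 1) q.2.1.1 q.2.1.2.1 q.2.1.2.2 hm hw
    have key := hG n q.1 q.2.1 (by rcases hpar with ⟨p1,p2,p3⟩|⟨p1,p2,p3⟩ <;> omega)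
      (by rcases hpar with ⟨p1,p2,p3⟩|⟨p1,p2,p3⟩ <;> omega) hw
    have t1 := two_tri (Gm q.1 q.2.1).1
    have t2 := two_tri (Gm q.1 q.2.1).2.1
    have t3 := two_tri (Gm q.1 q.2.1).2.2
    push_cast
    linarith
  · have hw : (n : ℤ) + 1 = q.2.1.1 ^ 2 + 3 * q.2.1.2.1 ^ 2 + 3 * q.2.1.2.2 ^ 2 := by
      have h2 := q.2.2
      push_cast at h2
      linarith
    have hpar := parity_facts ((n : ℤ) + 1) q.2.1.1 q.2.1.2.1 q.2.1.2.2 hm hw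
    have key := hFG q.1 q.2.1 hpar
    refine Prod.ext ?_ (Subtype.ext ?_)
    · simp [key]
    · simp [key]
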